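/- Let f(x) = (x² − x⁴/4)^{−3/2} (the force–law factor of the curved n-body problem with σ = 1), defined for 0 < x < 2. Then for x ∈ (0,2), d/dx (x·f(x)) < 0 if and only if x² < 8/5; in particular x ↦ x·f(x) is strictly decreasing on (0, √(8/5)). -/

import Mathlib

open Real Set

/-- The reduced force-law factor of the curved n-body problem with `σ = 1`,
defined for `0 < x < 2`. -/
noncomputable def fpos (x : ℝ) : ℝ := (x ^ 2 - x ^ 4 / 4) ^ (-(3 : ℝ) / 2)

lemma sq_sub_pow_four_div_four_pos {x : ℝ} (h0 : x ≠ 0) (h2 : x ^ 2 < 4) :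
    0 < x ^ 2 - x ^ 4 / 4 := by
  have h4 : 0 < 4 - x ^ 2 := by linarith
  rw [show x ^ 2 - x ^ 4 / 4 = x ^ 2 * (4 - x ^ 2) / 4 by ring]
  positivity

/-- With `u = x² − x⁴/4`, `(x u^{-3/2})' = u^{-5/2} (u − (3/2) x u') = u^{-5/2} x² (5x² − 8)/4`. -/
lemma hasDerivAt_mul_fpos {x : ℝ} (hu : x ^ 2 - x ^ 4 / 4 ≠ 0) :
    HasDerivAt (fun x : ℝ => x * fpos x)
      ((x ^ 2 - x ^ 4 / 4) ^ (-(5 : ℝ) / 2) * (x ^ 2 * (5 * x ^ 2 - 8) / 4)) x := by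
  have hderiv_u : HasDerivAt (fun x : ℝ => x ^ 2 - x ^ 4 / 4) (2 * x - x ^ 3) x :=
    ((hasDerivAt_pow 2 x).sub ((hasDerivAt_pow 4 x).div_const 4)).congr_deriv (by norm_num)
  have hf : HasDerivAt fpos
      ((2 * x - x ^ 3) * (-(3 : ℝ) / 2) * (x ^ 2 - x ^ 4 / 4) ^ (-(3 : ℝ) / 2 - 1)) x :=
    hderiv_u.rpow_const (Or.inl hu)
  have hpow : (x ^ 2 - x ^ 4 / 4) ^ (-(3 : ℝ) / 2)
      = (x ^ 2 - x ^ 4 / 4) ^ (-(5 : ℝ) / 2) * (x ^ 2 - x ^ 4 / 4) := by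
    rw [← rpow_add_one hu]
    norm_num
  have hexp : -(3 : ℝ) / 2 - 1 = -(5 : ℝ) / 2 := by norm_num
  refine ((hasDerivAt_id x).mul hf).congr_deriv ?_
  simp only [fpos, hpow, hexp, id_eq]
  ring

lemma deriv_mul_fpos_neg_iff {x : ℝ} (h0 : x ≠ 0) (hu : 0 < x ^ 2 - x ^ 4 / 4) :
    deriv (fun x : ℝ => x * fpos x) x < 0 ↔ x ^ 2 < 8 / 5 := by
  have hc : 0 < (x ^ 2 - x ^ 4 / 4) ^ (-(5 : ℝ) / 2) * (x ^ 2 / 4) := by positivity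
  have hderiv : deriv (fun x : ℝ => x * fpos x) x
      = -((x ^ 2 - x ^ 4 / 4) ^ (-(5 : ℝ) / 2) * (x ^ 2 / 4) * (8 - 5 * x ^ 2)) := by
    rw [(hasDerivAt_mul_fpos hu.ne').deriv]
    ring
  rw [hderiv, neg_lt_zero, mul_pos_iff_of_pos_left hc, sub_pos]
  constructor <;> intro h <;> linarith

theorem xf_decreasing_iff_sigma_pos :
    (∀ x : ℝ, x ∈ Set.Ioo (0 : ℝ) 2 →
      (deriv (fun x : ℝ => x * fpos x) x < 0 ↔ x ^ 2 < 8 / 5)) ∧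
    StrictAntiOn (fun x : ℝ => x * fpos x) (Set.Ioo 0 (Real.sqrt (8 / 5))) := by
  have hmem {x : ℝ} (hx : x ∈ Ioo 0 (√(8 / 5))) : x ^ 2 < 8 / 5 ∧ 0 < x ^ 2 - x ^ 4 / 4 := by
    have hsq : x ^ 2 < 8 / 5 := (lt_sqrt hx.1.le).mp hx.2
    exact ⟨hsq, sq_sub_pow_four_div_four_pos hx.1.ne' (by linarith)⟩
  refine ⟨fun x ⟨h0, h2⟩ =>
    deriv_mul_fpos_neg_iff h0.ne' (sq_sub_pow_four_div_four_pos h0.ne' (by nlinarith)), ?_⟩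
  apply strictAntiOn_of_deriv_neg (convex_Ioo _ _)
  · exact fun x hx => (hasDerivAt_mul_fpos (hmem hx).2.ne').continuousAt.continuousWithinAt
  · intro x hx
    rw [interior_Ioo] at hx
    exact (deriv_mul_fpos_neg_iff hx.1.ne' (hmem hx).2).mpr (hmem hx).1
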